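/- arXiv:2208.05684 — 3 statements merged into one kernel-verified Lean document; each statement's English description precedes it below -/
import Mathlib

section
/- Let A be an abelian category with enough projectives and enough injectives, and let (C, F) be a cotorsion pair in A. Then the following are equivalent: (i) (C, F) is complete; (ii) for every object X there is a short exact sequence 0 → F' → C' → X → 0 with C' ∈ C and F' ∈ F; (iii) for every object X there is a short exact sequence 0 → X → F'' → C'' → 0 with F'' ∈ F and C'' ∈ C. -/
open CategoryTheory

universe v u

variable {𝒜 : Type u} [Category.{v} 𝒜] [Abelian 𝒜]

/-- `Ext¹(X, Y) = 0`, expressed as: every short exact sequence `0 → Y → E → X → 0` splits. -/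
def Ext1Zero (X Y : 𝒜) : Prop :=
  ∀ (E : 𝒜) (i : Y ⟶ E) (p : E ⟶ X) (w : i ≫ p = 0),
    (ShortComplex.mk i p w).ShortExact → ∃ s : X ⟶ E, s ≫ p = 𝟙 X

/-- `(C, F)` is a cotorsion pair: `C = ⊥F` and `F = C⊥` with respect to `Ext¹`. -/
def IsCotorsionPair (C F : Set 𝒜) : Prop :=
  (∀ X : 𝒜, X ∈ C ↔ ∀ Y ∈ F, Ext1Zero X Y) ∧
  (∀ Y : 𝒜, Y ∈ F ↔ ∀ X ∈ C, Ext1Zero X Y)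

/-- `X` admits a special right approximation `0 → F' → C' → X → 0` with `C' ∈ C`, `F' ∈ F`. -/
def HasSpecialRightApprox (C F : Set 𝒜) (X : 𝒜) : Prop :=
  ∃ (Co Fo : 𝒜) (_ : Co ∈ C) (_ : Fo ∈ F) (i : Fo ⟶ Co) (p : Co ⟶ X) (w : i ≫ p = 0),
    (ShortComplex.mk i p w).ShortExact

/-- `X` admits a special left approximation `0 → X → F' → C' → 0` with `F' ∈ F`, `C' ∈ C`. -/
def HasSpecialLeftApprox (C F : Set 𝒜) (X : 𝒜) : Prop :=
  ∃ (Co Fo : 𝒜) (_ : Co ∈ C) (_ : Fo ∈ F) (i : X ⟶ Fo) (p : Fo ⟶ Co) (w : i ≫ p = 0),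
    (ShortComplex.mk i p w).ShortExact

/-- Completeness of a cotorsion pair. -/
def IsCompletePair (C F : Set 𝒜) : Prop :=
  ∀ X : 𝒜, HasSpecialRightApprox C F X ∧ HasSpecialLeftApprox C F X

/-- Closure under kernels of epimorphisms. -/
def ClosedUnderKernelsOfEpis (C : Set 𝒜) : Prop :=
  ∀ (K E Q : 𝒜) (i : K ⟶ E) (p : E ⟶ Q) (w : i ≫ p = 0),
    (ShortComplex.mk i p w).ShortExact → E ∈ C → Q ∈ C → K ∈ C

/-- Closure under cokernels of monomorphisms. -/
def ClosedUnderCokernelsOfMonos (F : Set 𝒜) : Prop :=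
  ∀ (K E Q : 𝒜) (i : K ⟶ E) (p : E ⟶ Q) (w : i ≫ p = 0),
    (ShortComplex.mk i p w).ShortExact → K ∈ F → E ∈ F → Q ∈ F

/-- `ExtVanish n X Y` means `Ext^{n+1}(X, Y) = 0`, via dimension shifting. -/
def ExtVanish : ℕ → 𝒜 → 𝒜 → Prop
  | 0, X, Y => Ext1Zero X Y
  | n + 1, X, Y => ∀ (K P : 𝒜) (i : K ⟶ P) (p : P ⟶ X) (w : i ≫ p = 0),
      (ShortComplex.mk i p w).ShortExact → Projective P → ExtVanish n K Y

/-!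
Salce's trick. Given special right approximations, embed `X` into an injective `I` with
cokernel `Q`, take a special right approximation `0 → F' → C' → Q → 0` and pull it back along
`I → Q`: the pullback `P` sits in `0 → X → P → C' → 0` and in `0 → F' → P → I → 0`, so `P ∈ F`
because `F` contains the injectives and is closed under extensions. The other direction is dual,
pushing out along a projective cover. Closure of `C⊥` under extensions is the usual
push-out/pull-back argument, and closure of `⊥F` follows by passing to `𝒜ᵒᵖ`.
-/

open Limits

section ShortExact

variable {S : ShortComplex 𝒜} (hS : S.ShortExact)
include hS

lemma shortExact_of_isPullback {P T : 𝒜} {fst : P ⟶ S.X₂} {snd : P ⟶ T} {f : T ⟶ S.X₃}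
    (sq : IsPullback fst snd S.g f) :
    (ShortComplex.mk (sq.lift S.f 0 (by simp)) snd (by simp)).ShortExact := by
  have := hS.mono_f
  have := hS.epi_g
  have : Epi snd := Abelian.epi_snd_of_isLimit _ _ sq.isLimit
  refine .mk' ?_ (mono_of_mono_fac (sq.lift_fst _ _ _)) this
  rw [ShortComplex.exact_iff_exact_up_to_refinements]
  intro A x hx
  obtain ⟨A', π, hπ, y, hy⟩ := hS.exact.exact_up_to_refinements (x ≫ fst) (by
    rw [Category.assoc, sq.w, reassoc_of% hx, zero_comp])
  exact ⟨A', π, hπ, y, sq.hom_ext (by simpa using hy) (by simp [hx])⟩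

lemma shortExact_of_isPushout {P T : 𝒜} {f : S.X₁ ⟶ T} {inl : S.X₂ ⟶ P} {inr : T ⟶ P}
    (sq : IsPushout S.f f inl inr) :
    (ShortComplex.mk inr (sq.desc S.g 0 (by simp)) (by simp)).ShortExact := by
  have := hS.mono_f
  have := hS.epi_g
  have : Mono inr := Abelian.mono_inr_of_isColimit _ _ sq.isColimit
  refine .mk' ?_ this (epi_of_epi_fac (sq.inl_desc _ _ _))
  rw [ShortComplex.exact_iff_exact_up_to_refinements]
  intro A x hx
  obtain ⟨A₁, π₁, _, x₂, x₃, hx₂₃⟩ := sq.hom_eq_add_up_to_refinements x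
  obtain ⟨A₂, π₂, _, x₁, hx₁⟩ := hS.exact.exact_up_to_refinements x₂ (by
    simpa [hx] using (hx₂₃ =≫ sq.desc S.g 0 (by simp)).symm)
  refine ⟨A₂, π₂ ≫ π₁, epi_comp _ _, x₁ ≫ f + π₂ ≫ x₃, ?_⟩
  simp only [Category.assoc, hx₂₃, Preadditive.comp_add, reassoc_of% hx₁, sq.w,
    Preadditive.add_comp]

lemma shortExact_comp_of_isPushout {G X P : 𝒜} {j : S.X₂ ⟶ G} {q : G ⟶ X} {w : j ≫ q = 0}
    (hT : (ShortComplex.mk j q w).ShortExact) {inl : G ⟶ P} {inr : S.X₃ ⟶ P}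
    (sq : IsPushout j S.g inl inr) :
    (ShortComplex.mk (S.f ≫ j) inl
      (by rw [Category.assoc, sq.w, S.zero_assoc, zero_comp])).ShortExact := by
  have := hS.mono_f
  have := hS.epi_g
  have := hT.mono_f
  have : Mono inr := Abelian.mono_inr_of_isColimit _ _ sq.isColimit
  have : Epi inl := PushoutCocone.epi_inl_of_is_pushout_of_epi sq.isColimit
  refine .mk' ?_ inferInstance this
  rw [ShortComplex.exact_iff_exact_up_to_refinements]
  intro A x hx
  have hxq : x ≫ q = 0 := by
    rw [← sq.inl_desc q 0 (by simp [w]), reassoc_of% hx, zero_comp]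
  let y := hT.exact.lift x hxq
  have hyg : y ≫ S.g = 0 := by
    rw [← cancel_mono inr, zero_comp, Category.assoc, ← sq.w, hT.exact.lift_f_assoc]
    exact hx
  refine ⟨A, 𝟙 A, inferInstance, hS.exact.lift y hyg, ?_⟩
  dsimp only
  rw [Category.id_comp, hS.exact.lift_f_assoc]
  exact (hT.exact.lift_f x hxq).symm

lemma exists_lift_of_ext1Zero {X : 𝒜} (h : Ext1Zero X S.X₁) (u : X ⟶ S.X₃) :
    ∃ t : X ⟶ S.X₂, t ≫ S.g = u := by
  obtain ⟨s, hs⟩ := h _ _ _ _ (shortExact_of_isPullback hS (IsPullback.of_hasPullback S.g u))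
  exact ⟨s ≫ pullback.fst _ _, by rw [Category.assoc, pullback.condition, reassoc_of% hs]⟩

end ShortExact

section Ext1Zero

open Opposite

lemma ext1Zero_iff_exists_retraction {X Y : 𝒜} :
    Ext1Zero X Y ↔ ∀ (E : 𝒜) (i : Y ⟶ E) (p : E ⟶ X) (w : i ≫ p = 0),
      (ShortComplex.mk i p w).ShortExact → ∃ r : E ⟶ Y, i ≫ r = 𝟙 Y := by
  refine forall₄_congr fun E i p w => imp_congr_right fun hS => ⟨?_, ?_⟩
  · rintro ⟨s, hs⟩
    let σ := ShortComplex.Splitting.ofExactOfSection _ hS.exact s hs hS.mono_f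
    exact ⟨σ.r, σ.f_r⟩
  · rintro ⟨r, hr⟩
    let σ := ShortComplex.Splitting.ofExactOfRetraction _ hS.exact r hr hS.epi_g
    exact ⟨σ.s, σ.s_g⟩

lemma ext1Zero_of_injective (X Y : 𝒜) [Injective Y] : Ext1Zero X Y :=
  ext1Zero_iff_exists_retraction.2 fun _ i _ _ hS =>
    have := hS.mono_f
    ⟨Injective.factorThru (𝟙 Y) i, Injective.comp_factorThru _ _⟩

lemma ext1Zero_of_projective (X Y : 𝒜) [Projective X] : Ext1Zero X Y := fun _ _ p _ hS =>
  have := hS.epi_g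
  ⟨Projective.factorThru (𝟙 X) p, Projective.factorThru_comp _ _⟩

lemma ext1Zero_op_iff {X Y : 𝒜} : Ext1Zero (op Y) (op X) ↔ Ext1Zero X Y := by
  rw [ext1Zero_iff_exists_retraction (X := X)]
  constructor
  · intro h E i p w hS
    obtain ⟨s, hs⟩ := h (op E) p.op i.op (by rw [← op_comp, w, op_zero]) hS.op
    exact ⟨s.unop, by simpa using congrArg Quiver.Hom.unop hs⟩
  · intro h E i p w hS
    obtain ⟨r, hr⟩ := h E.unop p.unop i.unop (by rw [← unop_comp, w, unop_zero]) hS.unop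
    exact ⟨r.op, by simpa using congrArg Quiver.Hom.op hr⟩

variable {S : ShortComplex 𝒜} (hS : S.ShortExact)
include hS

lemma ext1Zero_right_of_shortExact {X : 𝒜} (h₁ : Ext1Zero X S.X₁) (h₃ : Ext1Zero X S.X₃) :
    Ext1Zero X S.X₂ := by
  intro G j q w hT
  -- split the pushout along `S.g`, then lift the splitting through `G ⟶ pushout j S.g`,
  -- whose kernel is `S.X₁`
  have sq := IsPushout.of_hasPushout j S.g
  obtain ⟨s, hs⟩ := h₃ _ _ _ _ (shortExact_of_isPushout hT sq)
  obtain ⟨t, ht⟩ := exists_lift_of_ext1Zero (shortExact_comp_of_isPushout hS hT sq) h₁ s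
  exact ⟨t, by rw [← sq.inl_desc q 0 (by simp [w]), ← Category.assoc, ht, hs]⟩

lemma ext1Zero_left_of_shortExact {Y : 𝒜} (h₁ : Ext1Zero S.X₁ Y) (h₃ : Ext1Zero S.X₃ Y) :
    Ext1Zero S.X₂ Y :=
  ext1Zero_op_iff.1 <|
    ext1Zero_right_of_shortExact hS.op (ext1Zero_op_iff.2 h₃) (ext1Zero_op_iff.2 h₁)

end Ext1Zero

namespace IsCotorsionPair

variable {C F : Set 𝒜} (h : IsCotorsionPair C F)
include h

lemma mem_right_of_injective (I : 𝒜) [Injective I] : I ∈ F :=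
  (h.2 I).2 fun X _ => ext1Zero_of_injective X I

lemma mem_left_of_projective (P : 𝒜) [Projective P] : P ∈ C :=
  (h.1 P).2 fun Y _ => ext1Zero_of_projective P Y

lemma mem_right_of_shortExact {S : ShortComplex 𝒜} (hS : S.ShortExact) (h₁ : S.X₁ ∈ F)
    (h₃ : S.X₃ ∈ F) : S.X₂ ∈ F :=
  (h.2 _).2 fun X hX =>
    ext1Zero_right_of_shortExact hS ((h.2 _).1 h₁ X hX) ((h.2 _).1 h₃ X hX)

lemma mem_left_of_shortExact {S : ShortComplex 𝒜} (hS : S.ShortExact) (h₁ : S.X₁ ∈ C)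
    (h₃ : S.X₃ ∈ C) : S.X₂ ∈ C :=
  (h.1 _).2 fun Y hY =>
    ext1Zero_left_of_shortExact hS ((h.1 _).1 h₁ Y hY) ((h.1 _).1 h₃ Y hY)

lemma hasSpecialLeftApprox [EnoughInjectives 𝒜] (hr : ∀ X, HasSpecialRightApprox C F X)
    (X : 𝒜) : HasSpecialLeftApprox C F X := by
  let S := ShortComplex.cokernelSequence (Injective.ι X)
  have hS : S.ShortExact := .mk' (ShortComplex.cokernelSequence_exact _)
    (inferInstanceAs (Mono (Injective.ι X))) inferInstance
  obtain ⟨Co, Fo, hCo, hFo, _, p, _, hT⟩ := hr S.X₃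
  have sq := IsPullback.of_hasPullback p S.g
  exact ⟨Co, _, hCo, h.mem_right_of_shortExact (shortExact_of_isPullback hT sq) hFo
    (h.mem_right_of_injective (Injective.under X)), _, _, _, shortExact_of_isPullback hS sq.flip⟩

lemma hasSpecialRightApprox [EnoughProjectives 𝒜] (hl : ∀ X, HasSpecialLeftApprox C F X)
    (X : 𝒜) : HasSpecialRightApprox C F X := by
  let S := ShortComplex.kernelSequence (Projective.π X)
  have hS : S.ShortExact := .mk' (ShortComplex.kernelSequence_exact _)
    inferInstance (inferInstanceAs (Epi (Projective.π X)))
  obtain ⟨Co, Fo, hCo, hFo, i, _, _, hT⟩ := hl S.X₁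
  have sq := IsPushout.of_hasPushout S.f i
  exact ⟨_, Fo, h.mem_left_of_shortExact (shortExact_of_isPushout hT sq.flip)
    (h.mem_left_of_projective (Projective.over X)) hCo, hFo, _, _, _, shortExact_of_isPushout hS sq⟩

end IsCotorsionPair

/-- In an abelian category with enough projectives and injectives,
a cotorsion pair `(C, F)` is complete iff every object has a special right approximation,
iff every object has a special left approximation. -/
theorem cotorsion_pair_completeness_tfae {𝒜 : Type u} [Category.{v} 𝒜] [Abelian 𝒜]
    [EnoughProjectives 𝒜] [EnoughInjectives 𝒜]
    (C F : Set 𝒜) (h : IsCotorsionPair C F) :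
    (IsCompletePair C F ↔ ∀ X : 𝒜, HasSpecialRightApprox C F X) ∧
    (IsCompletePair C F ↔ ∀ X : 𝒜, HasSpecialLeftApprox C F X) :=
  ⟨⟨fun hc X => (hc X).1, fun hr X => ⟨hr X, h.hasSpecialLeftApprox hr X⟩⟩,
    ⟨fun hc X => (hc X).2, fun hl X => ⟨h.hasSpecialRightApprox hl X, hl X⟩⟩⟩
end

section
/- Let A be an abelian category with enough projectives and enough injectives, and let (C, F) be a cotorsion pair in A. Then the following are equivalent: (i) C is closed under kernels of epimorphisms and F is closed under cokernels of monomorphisms; (ii) C is closed under kernels of epimorphisms; (iii) F is closed under cokernels of monomorphisms; (iv) Ext²(C, F) = 0 for all C ∈ C, F ∈ F; (v) Extⁱ(C, F) = 0 for all i ≥ 1, C ∈ C, F ∈ F. -/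
open CategoryTheory

universe v u

variable {𝒜 : Type u} [Category.{v} 𝒜] [Abelian 𝒜]

section HereditaryHelpers

open CategoryTheory Limits

variable {𝒜 : Type u} [Category.{v} 𝒜] [Abelian 𝒜]

/-- From a section of `g` in a short exact sequence, get a retraction of `f`. -/
lemma hered_retraction_of_section {Y E X : 𝒜} {f : Y ⟶ E} {g : E ⟶ X} {w : f ≫ g = 0}
    (hS : (ShortComplex.mk f g w).ShortExact) {s : X ⟶ E} (hs : s ≫ g = 𝟙 X) :
    ∃ r : E ⟶ Y, f ≫ r = 𝟙 Y := by
  have hm : Mono f := hS.mono_f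
  have h0 : (𝟙 E - g ≫ s) ≫ g = 0 := by
    simp only [Preadditive.sub_comp, Category.id_comp, Category.assoc, hs, Category.comp_id,
      sub_self]
  obtain ⟨r, hr⟩ := KernelFork.IsLimit.lift' hS.fIsKernel (𝟙 E - g ≫ s) h0
  refine ⟨r, ?_⟩
  rw [← cancel_mono f]
  simp only [Category.assoc]
  rw [show r ≫ f = 𝟙 E - g ≫ s from hr]
  simp only [Preadditive.comp_sub, Category.comp_id, Category.id_comp]
  rw [reassoc_of% w, zero_comp, sub_zero]

/-- From a retraction of `f` in a short exact sequence, get a section of `g`. -/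
lemma hered_section_of_retraction {Y E X : 𝒜} {f : Y ⟶ E} {g : E ⟶ X} {w : f ≫ g = 0}
    (hS : (ShortComplex.mk f g w).ShortExact) {r : E ⟶ Y} (hr : f ≫ r = 𝟙 Y) :
    ∃ s : X ⟶ E, s ≫ g = 𝟙 X := by
  have he : Epi g := hS.epi_g
  have h0 : f ≫ (𝟙 E - r ≫ f) = 0 := by
    simp only [Preadditive.comp_sub, Category.comp_id, reassoc_of% hr, Category.id_comp, sub_self]
  obtain ⟨s, hs⟩ := CokernelCofork.IsColimit.desc' hS.gIsCokernel (𝟙 E - r ≫ f) h0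
  refine ⟨s, ?_⟩
  rw [← cancel_epi g, ← Category.assoc]
  rw [show g ≫ s = 𝟙 E - r ≫ f from hs]
  simp only [Preadditive.sub_comp, Category.id_comp, Category.assoc, w, comp_zero, sub_zero,
    Category.comp_id]

lemma hered_ext1Zero_of_projective {X Y : 𝒜} (hX : Projective X) : Ext1Zero X Y := by
  intro E i p w hS
  have := hS.epi_g
  exact ⟨Projective.factorThru (𝟙 X) p, Projective.factorThru_comp _ _⟩

lemma hered_ext1Zero_of_injective {X Y : 𝒜} (hY : Injective Y) : Ext1Zero X Y := by
  intro E i p w hS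
  have := hS.mono_f
  exact hered_section_of_retraction hS (Injective.comp_factorThru (𝟙 Y) i)

/-- A kernel inclusion gives a short exact sequence. -/
lemma hered_kernel_shortExact {E Q : 𝒜} (p : E ⟶ Q) [Epi p] :
    (ShortComplex.mk (kernel.ι p) p (kernel.condition p)).ShortExact := by
  refine ShortComplex.ShortExact.mk' ?_ inferInstance inferInstance
  exact ShortComplex.exact_of_f_is_kernel _ (kernelIsKernel p)

/-- A cokernel projection gives a short exact sequence. -/
lemma hered_cokernel_shortExact {Y I : 𝒜} (f : Y ⟶ I) [Mono f] :
    (ShortComplex.mk f (cokernel.π f) (cokernel.condition f)).ShortExact := by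
  refine ShortComplex.ShortExact.mk' ?_ inferInstance inferInstance
  exact ShortComplex.exact_of_g_is_cokernel _ (cokernelIsCokernel f)

/-- Pullback of a short exact sequence along `t : B ⟶ A`. -/
lemma hered_pullback_shortExact {Y M A B : 𝒜} {f : Y ⟶ M} {g : M ⟶ A} {w : f ≫ g = 0}
    (hS : (ShortComplex.mk f g w).ShortExact) (t : B ⟶ A) :
    (ShortComplex.mk (pullback.lift f (0 : Y ⟶ B) (by simp [w])) (pullback.snd g t)
      (pullback.lift_snd _ _ _)).ShortExact := by
  have hmf : Mono f := hS.mono_f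
  have heg : Epi g := hS.epi_g
  have hm : Mono (pullback.lift f (0 : Y ⟶ B) (show f ≫ g = 0 ≫ t by simp [w])) :=
    mono_of_mono_fac (pullback.lift_fst f (0 : Y ⟶ B) _)
  refine ShortComplex.ShortExact.mk' ?_ hm inferInstance
  apply ShortComplex.exact_of_f_is_kernel
  refine KernelFork.IsLimit.ofι' _ _ (fun {T} k hk => ?_)
  have hk' : (k ≫ pullback.fst g t) ≫ g = 0 := by
    rw [Category.assoc, pullback.condition, ← Category.assoc, hk, zero_comp]
  obtain ⟨e, he⟩ := KernelFork.IsLimit.lift' hS.fIsKernel _ hk'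
  refine ⟨e, ?_⟩
  apply pullback.hom_ext
  · dsimp only; rw [Category.assoc, pullback.lift_fst]; exact he
  · dsimp only at hk ⊢; rw [Category.assoc, pullback.lift_snd, comp_zero, hk]

/-- Pushout of a short exact sequence along `t : Y ⟶ I`. -/
lemma hered_pushout_shortExact {Y N Z I : 𝒜} {f : Y ⟶ N} {g : N ⟶ Z} {w : f ≫ g = 0}
    (hS : (ShortComplex.mk f g w).ShortExact) (t : Y ⟶ I) :
    (ShortComplex.mk (pushout.inr f t) (pushout.desc g (0 : I ⟶ Z) (by simp [w]))
      (pushout.inr_desc _ _ _)).ShortExact := by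
  have hmf : Mono f := hS.mono_f
  have heg : Epi g := hS.epi_g
  have he : Epi (pushout.desc g (0 : I ⟶ Z) (show f ≫ g = t ≫ 0 by simp [w])) :=
    epi_of_epi_fac (pushout.inl_desc g (0 : I ⟶ Z) _)
  refine ShortComplex.ShortExact.mk' ?_ inferInstance he
  apply ShortComplex.exact_of_g_is_cokernel
  refine CokernelCofork.IsColimit.ofπ' _ _ (fun {T} k hk => ?_)
  have hk' : f ≫ (pushout.inl f t ≫ k) = 0 := by
    rw [← Category.assoc, pushout.condition, Category.assoc, hk, comp_zero]
  obtain ⟨e, he'⟩ := CokernelCofork.IsColimit.desc' hS.gIsCokernel _ hk'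
  refine ⟨e, ?_⟩
  apply pushout.hom_ext
  · rw [← Category.assoc, pushout.inl_desc]; exact he'
  · dsimp only at hk ⊢; rw [← Category.assoc, pushout.inr_desc, zero_comp, hk]

/-- Lifting along the epimorphism of a short exact sequence, given `Ext¹` vanishing. -/
lemma hered_lift_of_ext1Zero {W A B Z : 𝒜} (hW : Ext1Zero W A)
    {a : A ⟶ B} {b : B ⟶ Z} {w : a ≫ b = 0}
    (hT : (ShortComplex.mk a b w).ShortExact) (k : W ⟶ Z) :
    ∃ κ : W ⟶ B, κ ≫ b = k := by
  obtain ⟨s, hs⟩ := hW _ _ _ _ (hered_pullback_shortExact hT k)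
  refine ⟨s ≫ pullback.fst b k, ?_⟩
  rw [Category.assoc, pullback.condition, ← Category.assoc, hs, Category.id_comp]

/-- Extending along the monomorphism of a short exact sequence, given `Ext¹` vanishing. -/
lemma hered_extend_of_ext1Zero {K P X Y : 𝒜} (hX : Ext1Zero X Y)
    {j : K ⟶ P} {π : P ⟶ X} {w : j ≫ π = 0}
    (hP : (ShortComplex.mk j π w).ShortExact) (κ : K ⟶ Y) :
    ∃ m : P ⟶ Y, j ≫ m = κ := by
  obtain ⟨s, hs⟩ := hX _ _ _ _ (hered_pushout_shortExact hP κ)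
  obtain ⟨r, hr⟩ := hered_retraction_of_section (hered_pushout_shortExact hP κ) hs
  refine ⟨pushout.inl j κ ≫ r, ?_⟩
  rw [← Category.assoc, pushout.condition, Category.assoc, hr, Category.comp_id]

end HereditaryHelpers

section HereditaryMain

open CategoryTheory Limits

variable {𝒜 : Type u} [Category.{v} 𝒜] [Abelian 𝒜]

/-- If `0 → K → D → B → 0` is exact and `Ext¹(K,Y) = 0 = Ext¹(B,Y)`, then `Ext¹(D,Y) = 0`. -/
lemma hered_ext1Zero_of_extension {K D B Y : 𝒜} {j : K ⟶ D} {q : D ⟶ B} {w : j ≫ q = 0}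
    (hS : (ShortComplex.mk j q w).ShortExact)
    (hK : Ext1Zero K Y) (hB : Ext1Zero B Y) : Ext1Zero D Y := by
  have hmj : Mono j := hS.mono_f
  have heq : Epi q := hS.epi_g
  intro N i r w' hN
  have hmi : Mono i := hN.mono_f
  have her : Epi r := hN.epi_g
  -- lift `j` along `r` using `Ext¹(K,Y) = 0`
  obtain ⟨u, hu⟩ := hered_lift_of_ext1Zero hK hN j
  have hmu : Mono u := mono_of_mono_fac hu
  -- the quotient extension `0 → Y → N/K → B → 0`
  have hrq : u ≫ r ≫ q = 0 := by rw [reassoc_of% hu, w]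
  set c : N ⟶ cokernel u := cokernel.π u with hc
  set d : cokernel u ⟶ B := cokernel.desc u (r ≫ q) hrq with hd
  have hcd : c ≫ d = r ≫ q := cokernel.π_desc _ _ _
  have w2 : (i ≫ c) ≫ d = 0 := by
    rw [Category.assoc, hcd, reassoc_of% w', zero_comp]
  have hmonic : Mono (i ≫ c) := by
    rw [Preadditive.mono_iff_cancel_zero]
    intro T a ha
    have ha' : (a ≫ i) ≫ cokernel.π u = 0 := by rw [Category.assoc]; exact ha
    have he : Abelian.monoLift u (a ≫ i) ha' ≫ u = a ≫ i := Abelian.monoLift_comp u _ ha'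
    have he0 : Abelian.monoLift u (a ≫ i) ha' = 0 := by
      rw [← cancel_mono j, zero_comp, ← hu, ← Category.assoc, he, Category.assoc, w',
        comp_zero]
    have : a ≫ i = 0 := by rw [← he, he0, zero_comp]
    exact zero_of_comp_mono i this
  have hepid : Epi d := by
    have : Epi (r ≫ q) := epi_comp r q
    exact epi_of_epi_fac hcd
  have hexact : (ShortComplex.mk (i ≫ c) d w2).Exact := by
    rw [ShortComplex.exact_iff_exact_up_to_refinements]
    intro T x₂ hx₂
    obtain ⟨T', π, hπ, y, hy⟩ := surjective_up_to_refinements_of_epi c x₂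
    have h1 : (y ≫ r) ≫ q = 0 := by
      rw [Category.assoc, ← hcd, ← Category.assoc, ← hy, Category.assoc]
      exact by rw [hx₂, comp_zero]
    obtain ⟨e, he⟩ := KernelFork.IsLimit.lift' hS.fIsKernel (y ≫ r) h1
    have he' : e ≫ j = y ≫ r := he
    have h2 : (y - e ≫ u) ≫ r = 0 := by
      rw [Preadditive.sub_comp, Category.assoc, hu, he', sub_self]
    obtain ⟨t, ht⟩ := KernelFork.IsLimit.lift' hN.fIsKernel _ h2
    have ht' : t ≫ i = y - e ≫ u := ht
    refine ⟨T', π, hπ, t, ?_⟩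
    rw [← Category.assoc, ht', Preadditive.sub_comp, Category.assoc,
      cokernel.condition, comp_zero, sub_zero, hy]
  have hSES2 : (ShortComplex.mk (i ≫ c) d w2).ShortExact :=
    ShortComplex.ShortExact.mk' hexact hmonic hepid
  obtain ⟨t, ht⟩ := hB _ _ _ w2 hSES2
  -- the comparison map to the pullback is an isomorphism
  set φ : N ⟶ pullback d q := pullback.lift c r hcd with hφ
  have hφfst : φ ≫ pullback.fst d q = c := pullback.lift_fst _ _ _
  have hφsnd : φ ≫ pullback.snd d q = r := pullback.lift_snd _ _ _
  have hmφ : Mono φ := by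
    rw [Preadditive.mono_iff_cancel_zero]
    intro T a ha
    have ha1 : a ≫ c = 0 := by rw [← hφfst, ← Category.assoc, ha, zero_comp]
    have ha2 : a ≫ r = 0 := by rw [← hφsnd, ← Category.assoc, ha, zero_comp]
    obtain ⟨e, he⟩ := KernelFork.IsLimit.lift' hN.fIsKernel a ha2
    have he' : e ≫ i = a := he
    have : e ≫ (i ≫ c) = 0 := by rw [← Category.assoc, he', ha1]
    have he0 : e = 0 := zero_of_comp_mono (i ≫ c) this
    rw [← he', he0, zero_comp]
  have heφ : Epi φ := by
    rw [epi_iff_surjective_up_to_refinements]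
    intro T z
    obtain ⟨T', π, hπ, n, hn⟩ := surjective_up_to_refinements_of_epi c (z ≫ pullback.fst d q)
    have h2 : (n ≫ r - π ≫ z ≫ pullback.snd d q) ≫ q = 0 := by
      rw [Preadditive.sub_comp, Category.assoc, ← hcd, ← Category.assoc, ← hn]
      simp only [Category.assoc, pullback.condition, sub_self]
    obtain ⟨e, he⟩ := KernelFork.IsLimit.lift' hS.fIsKernel _ h2
    have he' : e ≫ j = n ≫ r - π ≫ z ≫ pullback.snd d q := he
    refine ⟨T', π, hπ, n - e ≫ u, ?_⟩
    apply pullback.hom_ext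
    · simp only [Category.assoc]
      rw [hφfst, Preadditive.sub_comp, Category.assoc, cokernel.condition, comp_zero,
        sub_zero]
      simpa using hn
    · simp only [Category.assoc]
      rw [hφsnd, Preadditive.sub_comp, Category.assoc, hu, he', sub_sub_cancel]
  have hiso : IsIso φ := isIso_of_mono_of_epi φ
  have hlift : (q ≫ t) ≫ d = 𝟙 D ≫ q := by
    rw [Category.assoc, ht, Category.comp_id, Category.id_comp]
  refine ⟨pullback.lift (q ≫ t) (𝟙 D) hlift ≫ inv φ, ?_⟩
  have hinv : inv φ ≫ r = pullback.snd d q := by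
    rw [← hφsnd, ← Category.assoc, IsIso.inv_hom_id, Category.id_comp]
  rw [Category.assoc, hinv, pullback.lift_snd]

end HereditaryMain

open Limits

/-- In an abelian category with enough projectives and injectives, for a
cotorsion pair `(C, F)` the following are equivalent: (i) `C` is closed under kernels of
epimorphisms and `F` under cokernels of monomorphisms; (ii) `C` is closed under kernels of
epimorphisms; (iii) `F` is closed under cokernels of monomorphisms; (iv) `Ext²(C, F) = 0`;
(v) `Extⁱ(C, F) = 0` for all `i ≥ 1`. -/
theorem cotorsion_pair_hereditary_tfae {𝒜 : Type u} [Category.{v} 𝒜] [Abelian 𝒜]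
    [EnoughProjectives 𝒜] [EnoughInjectives 𝒜]
    (C F : Set 𝒜) (h : IsCotorsionPair C F) :
    List.TFAE [
      ClosedUnderKernelsOfEpis C ∧ ClosedUnderCokernelsOfMonos F,
      ClosedUnderKernelsOfEpis C,
      ClosedUnderCokernelsOfMonos F,
      ∀ X ∈ C, ∀ Y ∈ F, ExtVanish 1 X Y,
      ∀ X ∈ C, ∀ Y ∈ F, ∀ n : ℕ, ExtVanish n X Y] := by
  classical
  open Limits in
  obtain ⟨hC, hF⟩ := h
  have projC : ∀ P : 𝒜, Projective P → P ∈ C := fun P hP =>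
    (hC P).2 (fun Y _ => hered_ext1Zero_of_projective hP)
  have injF : ∀ I : 𝒜, Injective I → I ∈ F := fun I hI =>
    (hF I).2 (fun X _ => hered_ext1Zero_of_injective hI)
  tfae_have 1 → 2 := And.left
  tfae_have 2 → 5 := by
    intro h2 X hX Y hY n
    induction n generalizing X with
    | zero => exact (hC X).1 hX Y hY
    | succ n ih =>
      intro K P i p w hS hP
      exact ih K (h2 K P X i p w hS (projC P hP) hX)
  tfae_have 5 → 4 := fun h5 X hX Y hY => h5 X hX Y hY 1
  tfae_have 4 → 2 := by
    intro h4 K E Q i p w hS hE hQ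
    have hmi := hS.mono_f
    have hep := hS.epi_g
    apply (hC K).2
    intro Y hY
    have hP : (ShortComplex.mk (kernel.ι (Projective.π Q)) (Projective.π Q)
        (kernel.condition _)).ShortExact := hered_kernel_shortExact _
    have hK' : Ext1Zero (kernel (Projective.π Q)) Y :=
      h4 Q hQ Y hY _ _ _ _ _ hP (Projective.projective_over Q)
    have hED : Ext1Zero (pullback (Projective.π Q) p) Y :=
      hered_ext1Zero_of_extension (hered_pullback_shortExact hP p) hK' ((hC E).1 hE Y hY)
    have hτ : Projective.factorThru (Projective.π Q) p ≫ p = Projective.π Q :=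
      Projective.factorThru_comp _ _
    have h0 : (pullback.snd (Projective.π Q) p -
        pullback.fst (Projective.π Q) p ≫ Projective.factorThru (Projective.π Q) p) ≫ p = 0 := by
      rw [Preadditive.sub_comp, Category.assoc, hτ, pullback.condition, sub_self]
    obtain ⟨ρ, hρ⟩ := KernelFork.IsLimit.lift' hS.fIsKernel _ h0
    have hρ' : ρ ≫ i = pullback.snd (Projective.π Q) p -
        pullback.fst (Projective.π Q) p ≫ Projective.factorThru (Projective.π Q) p := hρ
    have hmρ : pullback.lift (0 : K ⟶ Projective.over Q) i
        (show (0 : K ⟶ Projective.over Q) ≫ Projective.π Q = i ≫ p by simp [w]) ≫ ρ = 𝟙 K := by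
      rw [← cancel_mono i, Category.assoc, hρ', Category.id_comp, Preadditive.comp_sub,
        pullback.lift_snd, ← Category.assoc, pullback.lift_fst, zero_comp, sub_zero]
    intro M f g w' hM
    obtain ⟨σ, hσ⟩ := hED _ _ _ _ (hered_pullback_shortExact hM ρ)
    refine ⟨pullback.lift (0 : K ⟶ Projective.over Q) i
        (show (0 : K ⟶ Projective.over Q) ≫ Projective.π Q = i ≫ p by simp [w]) ≫ σ ≫
        pullback.fst g ρ, ?_⟩
    rw [Category.assoc, Category.assoc, pullback.condition, ← Category.assoc σ, hσ,
      Category.id_comp, hmρ]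
  tfae_have 4 → 3 := by
    intro h4 A B Z a b wT hT hA hB
    apply (hF Z).2
    intro X hX
    intro M f g w' hM
    have hge := hM.epi_g
    have hP : (ShortComplex.mk (kernel.ι (Projective.π X)) (Projective.π X)
        (kernel.condition _)).ShortExact := hered_kernel_shortExact _
    have hτ : Projective.factorThru (Projective.π X) g ≫ g = Projective.π X :=
      Projective.factorThru_comp _ _
    have h1 : (kernel.ι (Projective.π X) ≫ Projective.factorThru (Projective.π X) g) ≫ g = 0 := by
      rw [Category.assoc, hτ, kernel.condition]
    obtain ⟨k, hk⟩ := KernelFork.IsLimit.lift' hM.fIsKernel _ h1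
    have hk' : k ≫ f = kernel.ι (Projective.π X) ≫ Projective.factorThru (Projective.π X) g := hk
    have hKA : Ext1Zero (kernel (Projective.π X)) A :=
      h4 X hX A hA _ _ _ _ _ hP (Projective.projective_over X)
    obtain ⟨κ, hκ⟩ := hered_lift_of_ext1Zero hKA hT k
    obtain ⟨m', hm'⟩ := hered_extend_of_ext1Zero ((hF B).1 hB X hX) hP κ
    have h2 : kernel.ι (Projective.π X) ≫
        (Projective.factorThru (Projective.π X) g - m' ≫ b ≫ f) = 0 := by
      have haux : kernel.ι (Projective.π X) ≫ m' ≫ b ≫ f = k ≫ f := by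
        rw [← Category.assoc, hm', ← Category.assoc, hκ]
      rw [Preadditive.comp_sub, haux, hk', sub_self]
    obtain ⟨σ, hσ⟩ := CokernelCofork.IsColimit.desc' hP.gIsCokernel _ h2
    have hσ' : Projective.π X ≫ σ =
        Projective.factorThru (Projective.π X) g - m' ≫ b ≫ f := hσ
    refine ⟨σ, ?_⟩
    rw [← cancel_epi (Projective.π X), ← Category.assoc, hσ', Preadditive.sub_comp, hτ,
      Category.assoc, Category.assoc, w', comp_zero, comp_zero, sub_zero, Category.comp_id]
  tfae_have 3 → 4 := by
    intro h3 X hX Y hY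
    intro K' P j π wP hP hProj
    have hT : (ShortComplex.mk (Injective.ι Y) (cokernel.π (Injective.ι Y))
        (cokernel.condition _)).ShortExact := hered_cokernel_shortExact _
    have hY'' : cokernel (Injective.ι Y) ∈ F :=
      h3 Y (Injective.under Y) _ (Injective.ι Y) (cokernel.π _) (cokernel.condition _) hT hY
        (injF _ (Injective.injective_under Y))
    have hXY'' : Ext1Zero X (cokernel (Injective.ι Y)) := (hF _).1 hY'' X hX
    intro N f g w' hN
    have hmf := hN.mono_f
    have hge := hN.epi_g
    have hpush := hered_pushout_shortExact hN (Injective.ι Y)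
    have hminr : Mono (pushout.inr f (Injective.ι Y)) := hpush.mono_f
    have hρ : pushout.inr f (Injective.ι Y) ≫
        Injective.factorThru (𝟙 _) (pushout.inr f (Injective.ι Y)) = 𝟙 _ :=
      Injective.comp_factorThru _ _
    have h1 : f ≫ (pushout.inl f (Injective.ι Y) ≫
        Injective.factorThru (𝟙 _) (pushout.inr f (Injective.ι Y)) ≫
        cokernel.π (Injective.ι Y)) = 0 := by
      rw [← Category.assoc, pushout.condition, Category.assoc, ← Category.assoc _ _ (cokernel.π _),
        hρ, Category.id_comp, cokernel.condition]
    obtain ⟨φ, hφ⟩ := CokernelCofork.IsColimit.desc' hN.gIsCokernel _ h1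
    have hφ' : g ≫ φ = pushout.inl f (Injective.ι Y) ≫
        Injective.factorThru (𝟙 _) (pushout.inr f (Injective.ι Y)) ≫
        cokernel.π (Injective.ι Y) := hφ
    obtain ⟨m', hm'⟩ := hered_extend_of_ext1Zero hXY'' hP φ
    have := hProj
    have hψ : (j ≫ Projective.factorThru m' (cokernel.π (Injective.ι Y))) ≫
        cokernel.π (Injective.ι Y) = φ := by
      rw [Category.assoc, Projective.factorThru_comp, hm']
    have h2 : (pushout.inl f (Injective.ι Y) ≫
        Injective.factorThru (𝟙 _) (pushout.inr f (Injective.ι Y)) -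
        g ≫ (j ≫ Projective.factorThru m' (cokernel.π (Injective.ι Y)))) ≫
        cokernel.π (Injective.ι Y) = 0 := by
      rw [Preadditive.sub_comp, Category.assoc, Category.assoc, hψ, hφ', sub_self]
    obtain ⟨δ, hδ⟩ := KernelFork.IsLimit.lift' hT.fIsKernel _ h2
    have hδ' : δ ≫ Injective.ι Y = pushout.inl f (Injective.ι Y) ≫
        Injective.factorThru (𝟙 _) (pushout.inr f (Injective.ι Y)) -
        g ≫ (j ≫ Projective.factorThru m' (cokernel.π (Injective.ι Y))) := hδ
    have hrδ : f ≫ δ = 𝟙 Y := by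
      rw [← cancel_mono (Injective.ι Y), Category.assoc, hδ', Category.id_comp,
        Preadditive.comp_sub, ← Category.assoc f g, w', zero_comp, sub_zero,
        ← Category.assoc, pushout.condition, Category.assoc, hρ, Category.comp_id]
    exact hered_section_of_retraction hN hrδ
  tfae_have 4 → 1 := fun h4 => ⟨tfae_4_to_2 h4, tfae_4_to_3 h4⟩
  tfae_finish
end

section
/- Let A be an abelian category with enough projectives and injectives, (A₀, B₀) a hereditary cotorsion pair in A, and 0 → X → Y → Z → 0 a short exact sequence. If X and Z each admit a special right A₀-approximation (i.e., exact sequences 0 → B₁ → A₁ → X → 0 and 0 → B₂ → A₂ → Z → 0 with Aᵢ ∈ A₀, Bᵢ ∈ B₀), then Y admits a special right A₀-approximation. -/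
open CategoryTheory

universe v u

variable {𝒜 : Type u} [Category.{v} 𝒜] [Abelian 𝒜]

/-! ### Auxiliary lemmas -/

open CategoryTheory.Limits CategoryTheory.Abelian
open CategoryTheory.Abelian.Pseudoelement
open scoped Pseudoelement

attribute [local instance] CategoryTheory.Abelian.Pseudoelement.objectToSort
  CategoryTheory.Abelian.Pseudoelement.homToFun

namespace SRA

/-- Pullback of a short exact sequence along a morphism to the cokernel. -/
lemma pullback_shortExact {B E T T' : 𝒜} (b : B ⟶ E) (q : E ⟶ T) (wbq : b ≫ q = 0)
    (hse : (ShortComplex.mk b q wbq).ShortExact) (g : T' ⟶ T) :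
    (ShortComplex.mk (pullback.lift b 0 (by rw [wbq, zero_comp]) : B ⟶ pullback q g)
      (pullback.snd q g) (by simp [pullback.lift_snd])).ShortExact := by
  have hb : Mono b := hse.mono_f
  have hq : Epi q := hse.epi_g
  have hmono : Mono (pullback.lift b 0 (by rw [wbq, zero_comp]) : B ⟶ pullback q g) :=
    mono_of_mono_fac (pullback.lift_fst b 0 _)
  refine ShortComplex.ShortExact.mk' (ShortComplex.exact_of_f_is_kernel _ ?_) hmono
    inferInstance
  exact KernelFork.IsLimit.ofι' _ _ (fun {V} t ht => by
    have h1 : (t ≫ pullback.fst q g) ≫ q = 0 := by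
      rw [Category.assoc, pullback.condition, ← Category.assoc, ht, zero_comp]
    obtain ⟨m, hm⟩ := KernelFork.IsLimit.lift' hse.fIsKernel (t ≫ pullback.fst q g) h1
    refine ⟨m, ?_⟩
    apply pullback.hom_ext
    · simpa [pullback.lift_fst] using hm
    · simpa [pullback.lift_snd] using ht.symm)

/-- Pushout of a short exact sequence along a morphism from the kernel. -/
lemma pushout_shortExact {K P Q A₁ : 𝒜} (iK : K ⟶ P) (q : P ⟶ Q) (wq : iK ≫ q = 0)
    (hse : (ShortComplex.mk iK q wq).ShortExact) (l : K ⟶ A₁) :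
    (ShortComplex.mk (pushout.inr iK l)
      (pushout.desc q 0 (by rw [wq, comp_zero]) : pushout iK l ⟶ Q) (by simp [pushout.inr_desc])).ShortExact := by
  have hiK : Mono iK := hse.mono_f
  have hq : Epi q := hse.epi_g
  have hepi : Epi (pushout.desc q 0 (by rw [wq, comp_zero]) : pushout iK l ⟶ Q) :=
    epi_of_epi_fac (pushout.inl_desc q 0 _)
  refine ShortComplex.ShortExact.mk' (ShortComplex.exact_of_g_is_cokernel _ ?_)
    inferInstance hepi
  exact CokernelCofork.IsColimit.ofπ' _ _ (fun {V} t ht => by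
    have h1 : iK ≫ pushout.inl iK l ≫ t = 0 := by
      rw [← Category.assoc, pushout.condition, Category.assoc, ht, comp_zero]
    obtain ⟨m, hm⟩ := CokernelCofork.IsColimit.desc' hse.gIsCokernel (pushout.inl iK l ≫ t) h1
    refine ⟨m, ?_⟩
    apply pushout.hom_ext
    · simpa [pushout.inl_desc_assoc] using hm
    · simpa [pushout.inr_desc_assoc] using ht.symm)

/-- Noether-type lemma: given `0 → B₁ → K → B₂ → 0` and `0 → K → E → T → 0`,
the sequence `0 → B₂ → E/B₁ → T → 0` is short exact. -/
lemma noether_shortExact {B₁ K B₂ E T : 𝒜} (b : B₁ ⟶ K) (e : K ⟶ B₂) (wbe : b ≫ e = 0)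
    (hse1 : (ShortComplex.mk b e wbe).ShortExact)
    (j : K ⟶ E) (q : E ⟶ T) (wjq : j ≫ q = 0)
    (hse2 : (ShortComplex.mk j q wjq).ShortExact) :
    ∃ (j₂ : B₂ ⟶ cokernel (b ≫ j)) (c' : cokernel (b ≫ j) ⟶ T) (w2 : j₂ ≫ c' = 0),
      e ≫ j₂ = j ≫ cokernel.π (b ≫ j) ∧ cokernel.π (b ≫ j) ≫ c' = q ∧
      (ShortComplex.mk j₂ c' w2).ShortExact := by
  have hbmono : Mono b := hse1.mono_f
  have heepi : Epi e := hse1.epi_g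
  have hjmono : Mono j := hse2.mono_f
  have hqepi : Epi q := hse2.epi_g
  obtain ⟨j₂, hj₂⟩ := CokernelCofork.IsColimit.desc' hse1.gIsCokernel
    (j ≫ cokernel.π (b ≫ j)) (by rw [← Category.assoc, cokernel.condition])
  replace hj₂ : e ≫ j₂ = j ≫ cokernel.π (b ≫ j) := hj₂
  have hc'q : cokernel.π (b ≫ j) ≫ cokernel.desc (b ≫ j) q
      (by rw [Category.assoc, wjq, comp_zero]) = q := cokernel.π_desc _ _ _
  set c' := cokernel.desc (b ≫ j) q (by rw [Category.assoc, wjq, comp_zero]) with hc'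
  have w2 : j₂ ≫ c' = 0 := by
    rw [← cancel_epi e, ← Category.assoc, hj₂, Category.assoc, hc'q, wjq, comp_zero]
  have hbjexact : (ShortComplex.mk (b ≫ j) (cokernel.π (b ≫ j)) (cokernel.condition _)).Exact :=
    ShortComplex.exact_of_g_is_cokernel _ (cokernelIsCokernel _)
  have hmono : Mono j₂ := by
    apply mono_of_zero_of_map_zero
    intro a ha
    obtain ⟨y, hy⟩ := pseudo_surjective_of_epi e a
    have h1 : (cokernel.π (b ≫ j) : E ⟶ cokernel (b ≫ j)) ((j : K ⟶ E) y) = 0 := by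
      rw [← Pseudoelement.comp_apply, ← hj₂, Pseudoelement.comp_apply, hy, ha]
    obtain ⟨z, hz⟩ := pseudo_exact_of_exact hbjexact _ h1
    replace hz : ((b ≫ j : B₁ ⟶ E)) z = (j : K ⟶ E) y := hz
    rw [Pseudoelement.comp_apply] at hz
    have hbz : (b : B₁ ⟶ K) z = y := pseudo_injective_of_mono j hz
    rw [← hy, ← hbz, ← Pseudoelement.comp_apply, wbe, Pseudoelement.zero_apply]
  have hepi : Epi c' := epi_of_epi_fac hc'q
  have hexact : (ShortComplex.mk j₂ c' w2).Exact := by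
    apply exact_of_pseudo_exact
    intro x hx
    replace hx : (c' : cokernel (b ≫ j) ⟶ T) x = 0 := hx
    obtain ⟨y, hy⟩ := pseudo_surjective_of_epi (cokernel.π (b ≫ j)) x
    have h1 : (q : E ⟶ T) y = 0 := by
      rw [← hc'q, Pseudoelement.comp_apply, hy, hx]
    obtain ⟨z, hz⟩ := pseudo_exact_of_exact hse2.exact _ h1
    replace hz : (j : K ⟶ E) z = y := hz
    refine ⟨(e : K ⟶ B₂) z, ?_⟩
    show (j₂ : B₂ ⟶ cokernel (b ≫ j)) _ = x
    rw [← Pseudoelement.comp_apply, hj₂, Pseudoelement.comp_apply, hz, hy]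
  exact ⟨j₂, c', w2, hj₂, hc'q, ShortComplex.ShortExact.mk' hexact hmono hepi⟩

/-- Kernel of a composite of two epis from short exact sequences. -/
lemma comp_kernel_shortExact {B₁ A W Y B₂ : 𝒜} (b₁ : B₁ ⟶ A) (φ : A ⟶ W) (w1 : b₁ ≫ φ = 0)
    (hse1 : (ShortComplex.mk b₁ φ w1).ShortExact)
    (b₂ : B₂ ⟶ W) (π : W ⟶ Y) (w2 : b₂ ≫ π = 0)
    (hse2 : (ShortComplex.mk b₂ π w2).ShortExact) :
    ∃ (u : B₁ ⟶ kernel (φ ≫ π)) (v : kernel (φ ≫ π) ⟶ B₂) (wuv : u ≫ v = 0),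
      (ShortComplex.mk u v wuv).ShortExact ∧
      (ShortComplex.mk (kernel.ι (φ ≫ π)) (φ ≫ π) (kernel.condition _)).ShortExact := by
  have hb₁ : Mono b₁ := hse1.mono_f
  have hφ : Epi φ := hse1.epi_g
  have hb₂ : Mono b₂ := hse2.mono_f
  have hπ : Epi π := hse2.epi_g
  have hψepi : Epi (φ ≫ π) := epi_comp φ π
  have hseψ : (ShortComplex.mk (kernel.ι (φ ≫ π)) (φ ≫ π) (kernel.condition _)).ShortExact :=
    ShortComplex.ShortExact.mk' (ShortComplex.exact_of_f_is_kernel _ (kernelIsKernel _))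
      inferInstance hψepi
  have hu : b₁ ≫ φ ≫ π = 0 := by rw [← Category.assoc, w1, zero_comp]
  set u : B₁ ⟶ kernel (φ ≫ π) := kernel.lift (φ ≫ π) b₁ hu with hudef
  have huι : u ≫ kernel.ι (φ ≫ π) = b₁ := kernel.lift_ι _ _ _
  obtain ⟨v, hv⟩ := KernelFork.IsLimit.lift' hse2.fIsKernel (kernel.ι (φ ≫ π) ≫ φ)
    (by rw [Category.assoc, kernel.condition])
  replace hv : v ≫ b₂ = kernel.ι (φ ≫ π) ≫ φ := hv
  have wuv : u ≫ v = 0 := by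
    rw [← cancel_mono b₂, Category.assoc, hv, ← Category.assoc, huι, w1, zero_comp]
  have humono : Mono u := mono_of_mono_fac huι
  have hvepi : Epi v := by
    apply epi_of_pseudo_surjective
    intro x
    have h1 : (π : W ⟶ Y) ((b₂ : B₂ ⟶ W) x) = 0 := by
      rw [← Pseudoelement.comp_apply, w2, Pseudoelement.zero_apply]
    obtain ⟨a, ha⟩ := pseudo_surjective_of_epi φ ((b₂ : B₂ ⟶ W) x)
    have h2 : (φ ≫ π : A ⟶ Y) a = 0 := by rw [Pseudoelement.comp_apply, ha, h1]
    obtain ⟨y, hy⟩ := pseudo_exact_of_exact hseψ.exact _ h2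
    replace hy : (kernel.ι (φ ≫ π) : kernel (φ ≫ π) ⟶ A) y = a := hy
    refine ⟨y, pseudo_injective_of_mono b₂ ?_⟩
    rw [← Pseudoelement.comp_apply, hv, Pseudoelement.comp_apply, hy, ha]
  have hexact : (ShortComplex.mk u v wuv).Exact := by
    apply exact_of_pseudo_exact
    intro x hx
    replace hx : (v : kernel (φ ≫ π) ⟶ B₂) x = 0 := hx
    have h1 : (φ : A ⟶ W) ((kernel.ι (φ ≫ π) : kernel (φ ≫ π) ⟶ A) x) = 0 := by
      rw [← Pseudoelement.comp_apply, ← hv, Pseudoelement.comp_apply, hx, apply_zero]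
    obtain ⟨z, hz⟩ := pseudo_exact_of_exact hse1.exact _ h1
    replace hz : (b₁ : B₁ ⟶ A) z = (kernel.ι (φ ≫ π) : kernel (φ ≫ π) ⟶ A) x := hz
    refine ⟨z, pseudo_injective_of_mono (kernel.ι (φ ≫ π)) ?_⟩
    show (kernel.ι (φ ≫ π) : kernel (φ ≫ π) ⟶ A) ((u : B₁ ⟶ kernel (φ ≫ π)) z) = _
    rw [← Pseudoelement.comp_apply, huι, hz]
  exact ⟨u, v, wuv, ShortComplex.ShortExact.mk' hexact humono hvepi, hseψ⟩

/-- A morphism of short exact sequences which is epi on the left and compatible on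
the right has a short exact middle column given by the kernel of the left map. -/
lemma middle_shortExact {B₁ A₁ X A A₂ W : 𝒜}
    (b₁ : B₁ ⟶ A₁) (f : A₁ ⟶ X) (w0 : b₁ ≫ f = 0)
    (hse0 : (ShortComplex.mk b₁ f w0).ShortExact)
    (inr : A₁ ⟶ A) (d : A ⟶ A₂) (w1 : inr ≫ d = 0)
    (hse1 : (ShortComplex.mk inr d w1).ShortExact)
    (iX : X ⟶ W) (sd : W ⟶ A₂) (w2 : iX ≫ sd = 0)
    (hse2 : (ShortComplex.mk iX sd w2).ShortExact)
    (φ : A ⟶ W) (h1 : inr ≫ φ = f ≫ iX) (h2 : φ ≫ sd = d) :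
    (ShortComplex.mk (b₁ ≫ inr) φ
      (by rw [Category.assoc, h1, ← Category.assoc, w0, zero_comp])).ShortExact := by
  have hb₁ : Mono b₁ := hse0.mono_f
  have hf : Epi f := hse0.epi_g
  have hinr : Mono inr := hse1.mono_f
  have hd : Epi d := hse1.epi_g
  have hiX : Mono iX := hse2.mono_f
  have hsd : Epi sd := hse2.epi_g
  have hepi : Epi φ := by
    have h3 : f ≫ iX ≫ cokernel.π φ = 0 := by
      rw [← Category.assoc, ← h1, Category.assoc, cokernel.condition, comp_zero]
    have h4 : iX ≫ cokernel.π φ = 0 := zero_of_epi_comp f h3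
    obtain ⟨m, hm⟩ := CokernelCofork.IsColimit.desc' hse2.gIsCokernel (cokernel.π φ) h4
    replace hm : sd ≫ m = cokernel.π φ := hm
    have h5 : d ≫ m = 0 := by rw [← h2, Category.assoc, hm, cokernel.condition]
    have h6 : m = 0 := zero_of_epi_comp d h5
    have h7 : cokernel.π φ = 0 := by rw [← hm, h6, comp_zero]
    exact Abelian.epi_of_cokernel_π_eq_zero (f := φ) h7
  have hexact : (ShortComplex.mk (b₁ ≫ inr) φ
      (by rw [Category.assoc, h1, ← Category.assoc, w0, zero_comp])).Exact := by
    apply exact_of_pseudo_exact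
    intro x hx
    replace hx : (φ : A ⟶ W) x = 0 := hx
    have hdx : (d : A ⟶ A₂) x = 0 := by
      rw [← h2, Pseudoelement.comp_apply, hx, apply_zero]
    obtain ⟨y, hy⟩ := pseudo_exact_of_exact hse1.exact _ hdx
    replace hy : (inr : A₁ ⟶ A) y = x := hy
    have h8 : (iX : X ⟶ W) ((f : A₁ ⟶ X) y) = 0 := by
      rw [← Pseudoelement.comp_apply, ← h1, Pseudoelement.comp_apply, hy, hx]
    have h9 : (f : A₁ ⟶ X) y = 0 := by
      apply pseudo_injective_of_mono iX
      rw [h8, apply_zero]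
    obtain ⟨z, hz⟩ := pseudo_exact_of_exact hse0.exact _ h9
    replace hz : (b₁ : B₁ ⟶ A₁) z = y := hz
    refine ⟨z, ?_⟩
    show ((b₁ ≫ inr : B₁ ⟶ A)) z = x
    rw [Pseudoelement.comp_apply, hz, hy]
  exact ShortComplex.ShortExact.mk' hexact (mono_comp _ _) hepi

/-- `Ext1Zero` transfers to the opposite category. -/
lemma ext1Zero_op {X Y : 𝒜} (h : Ext1Zero X Y) :
    Ext1Zero (𝒜 := 𝒜ᵒᵖ) (Opposite.op Y) (Opposite.op X) := by
  intro E' i' p' w' hse'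
  have hu : ((ShortComplex.mk i' p' w').unop).ShortExact := hse'.unop
  obtain ⟨s, hs⟩ := h E'.unop p'.unop i'.unop (by rw [← unop_comp, w']; rfl) hu
  have hret : i' ≫ s.op = 𝟙 (Opposite.op X) := by
    rw [← op_id]
    rw [show (𝟙 X : X ⟶ X) = s ≫ i'.unop from hs.symm]
    rfl
  have spl := ShortComplex.Splitting.ofExactOfRetraction (ShortComplex.mk i' p' w')
    hse'.exact s.op hret hse'.epi_g
  exact ⟨spl.s, spl.s_g⟩

/-- `Ext1Zero` transfers from the opposite category. -/
lemma ext1Zero_unop {X Y : 𝒜} (h : Ext1Zero (𝒜 := 𝒜ᵒᵖ) (Opposite.op Y) (Opposite.op X)) :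
    Ext1Zero X Y := by
  intro E iY pX w hse
  obtain ⟨s, hs⟩ := h (Opposite.op E) pX.op iY.op (by rw [← op_comp, w]; rfl) hse.op
  have hret : iY ≫ s.unop = 𝟙 Y := by
    rw [← unop_id]
    rw [show (𝟙 (Opposite.op Y) : _) = s ≫ iY.op from hs.symm]
    rfl
  have spl := ShortComplex.Splitting.ofExactOfRetraction (ShortComplex.mk iY pX w)
    hse.exact s.unop hret hse.epi_g
  exact ⟨spl.s, spl.s_g⟩

/-- `Ext1Zero T -` is closed under extensions in the second variable. -/
lemma ext1Zero_of_shortExact₂ {B₁ K B₂ : 𝒜} (T : 𝒜)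
    (b : B₁ ⟶ K) (e : K ⟶ B₂) (wbe : b ≫ e = 0)
    (hse : (ShortComplex.mk b e wbe).ShortExact)
    (h1 : Ext1Zero T B₁) (h2 : Ext1Zero T B₂) : Ext1Zero T K := by
  intro E j q wjq hjq
  obtain ⟨j₂, c', w2, hcomm, hc'q, hseF⟩ := noether_shortExact b e wbe hse j q wjq hjq
  obtain ⟨s, hs⟩ := h2 _ j₂ c' w2 hseF
  have hbj : (ShortComplex.mk (b ≫ j) (cokernel.π (b ≫ j))
      (cokernel.condition _)).ShortExact := by
    have := hse.mono_f
    have := hjq.mono_f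
    exact ShortComplex.ShortExact.mk'
      (ShortComplex.exact_of_g_is_cokernel _ (cokernelIsCokernel _)) (mono_comp _ _)
      inferInstance
  have hpb := pullback_shortExact (b ≫ j) (cokernel.π (b ≫ j)) (cokernel.condition _) hbj s
  obtain ⟨t, ht⟩ := h1 _ _ _ _ hpb
  refine ⟨t ≫ pullback.fst (cokernel.π (b ≫ j)) s, ?_⟩
  rw [Category.assoc, ← hc'q, pullback.condition_assoc, ← Category.assoc, ht, Category.id_comp]
  exact hs

/-- `Ext1Zero - B` is closed under extensions in the first variable. -/
lemma ext1Zero_of_shortExact₁ {A₁ A A₂ : 𝒜} (B : 𝒜)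
    (i₁ : A₁ ⟶ A) (p₂ : A ⟶ A₂) (w : i₁ ≫ p₂ = 0)
    (hse : (ShortComplex.mk i₁ p₂ w).ShortExact)
    (h1 : Ext1Zero A₁ B) (h2 : Ext1Zero A₂ B) : Ext1Zero A B := by
  apply ext1Zero_unop
  exact ext1Zero_of_shortExact₂ (𝒜 := 𝒜ᵒᵖ) (Opposite.op B) p₂.op i₁.op
    (by rw [← op_comp, w]; rfl) hse.op (ext1Zero_op h2) (ext1Zero_op h1)

end SRA

/-- Let `(A₀, B₀)` be a hereditary cotorsion pair (i.e. `Extⁱ(A₀, B₀) = 0`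
for all `i ≥ 1`) in an abelian category with enough projectives and injectives, and let
`0 → X → Y → Z → 0` be a short exact sequence. If `X` and `Z` admit special right
`A₀`-approximations, then so does `Y`. -/
theorem special_right_approx_of_ses {𝒜 : Type u} [Category.{v} 𝒜] [Abelian 𝒜]
    [EnoughProjectives 𝒜] [EnoughInjectives 𝒜]
    (A₀ B₀ : Set 𝒜) (hcp : IsCotorsionPair A₀ B₀)
    (hher : ∀ X ∈ A₀, ∀ Y ∈ B₀, ∀ n : ℕ, ExtVanish n X Y)
    (X Y Z : 𝒜) (i : X ⟶ Y) (p : Y ⟶ Z) (w : i ≫ p = 0)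
    (hse : (ShortComplex.mk i p w).ShortExact)
    (hX : HasSpecialRightApprox A₀ B₀ X) (hZ : HasSpecialRightApprox A₀ B₀ Z) :
    HasSpecialRightApprox A₀ B₀ Y := by
  obtain ⟨A₁, B₁, hA₁, hB₁, b₁, f, w₁, hse₁⟩ := hX
  obtain ⟨A₂, B₂, hA₂, hB₂, b₂, g, w₂, hse₂⟩ := hZ
  -- `W = Y ×_Z A₂`; two short exact sequences on `W`.
  -- `0 → X → W → A₂ → 0`:
  have hseX := SRA.pullback_shortExact i p w hse g
  set iW : X ⟶ pullback p g := pullback.lift i 0 (by rw [w, Limits.zero_comp]) with hiWdef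
  -- `0 → B₂ → W → Y → 0`, obtained via the symmetry of the pullback:
  have hseB := SRA.pullback_shortExact b₂ g w₂ hse₂ p
  set ι₂ : B₂ ⟶ pullback p g := pullback.lift 0 b₂ (by rw [w₂, Limits.zero_comp]) with hι₂def
  have hseWY : (ShortComplex.mk ι₂ (pullback.fst p g)
      (by rw [hι₂def, pullback.lift_fst])).ShortExact := by
    apply ShortComplex.shortExact_of_iso _ hseB
    refine ShortComplex.isoMk (Iso.refl _) (Limits.pullbackSymmetry g p) (Iso.refl _) ?_ ?_
    · apply pullback.hom_ext <;>
        simp [hι₂def, Limits.pullbackSymmetry_hom_comp_fst, Limits.pullbackSymmetry_hom_comp_snd,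
          pullback.lift_fst, pullback.lift_snd]
    · simp [Limits.pullbackSymmetry_hom_comp_snd]
  -- projective presentation of `A₂`
  set P := Projective.over A₂ with hPdef
  set d : P ⟶ A₂ := Projective.π A₂ with hddef
  set κ : Limits.kernel d ⟶ P := Limits.kernel.ι d with hκdef
  have hseP : (ShortComplex.mk κ d (Limits.kernel.condition d)).ShortExact :=
    ShortComplex.ShortExact.mk'
      (ShortComplex.exact_of_f_is_kernel _ (Limits.kernelIsKernel d))
      inferInstance inferInstance
  -- lift `d` along the epi `W → A₂`
  have hsndepi : Epi (pullback.snd p g) := hseX.epi_g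
  set h : P ⟶ pullback p g := Projective.factorThru d (pullback.snd p g) with hhdef
  have hh : h ≫ pullback.snd p g = d := Projective.factorThru_comp _ _
  -- the induced map `k` on kernels
  obtain ⟨k, hk⟩ := Limits.KernelFork.IsLimit.lift' hseX.fIsKernel (κ ≫ h)
    (by rw [Category.assoc, hh, Limits.kernel.condition])
  replace hk : k ≫ iW = κ ≫ h := hk
  -- hereditarity gives `Ext¹(kernel d, B₁) = 0`
  have hext : Ext1Zero (Limits.kernel d) B₁ :=
    hher A₂ hA₂ B₁ hB₁ 1 (Limits.kernel d) P κ d (Limits.kernel.condition d) hseP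
      (Projective.projective_over A₂)
  -- lift `k` through `f` using this vanishing
  have hpbf := SRA.pullback_shortExact b₁ f w₁ hse₁ k
  obtain ⟨s₀, hs₀⟩ := hext _ _ _ _ hpbf
  set l : Limits.kernel d ⟶ A₁ := s₀ ≫ pullback.fst f k with hldef
  have hlf : l ≫ f = k := by
    rw [hldef, Category.assoc, pullback.condition, ← Category.assoc, hs₀, Category.id_comp]
  -- the pushout `A`, an extension of `A₂` by `A₁`
  have hpush := SRA.pushout_shortExact κ d (Limits.kernel.condition d) hseP l
  set dd : pushout κ l ⟶ A₂ := pushout.desc d 0 (by rw [Limits.kernel.condition, Limits.comp_zero])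
    with hdddef
  set φ : pushout κ l ⟶ pullback p g := pushout.desc h (f ≫ iW)
    (by rw [← Category.assoc, hlf, hk]) with hφdef
  have hφ1 : pushout.inr κ l ≫ φ = f ≫ iW := by rw [hφdef, pushout.inr_desc]
  have hφ2 : φ ≫ pullback.snd p g = dd := by
    apply pushout.hom_ext
    · rw [hφdef, hdddef, ← Category.assoc, pushout.inl_desc, pushout.inl_desc, hh]
    · rw [hφdef, hdddef, ← Category.assoc, pushout.inr_desc, pushout.inr_desc,
        Category.assoc, hiWdef, pullback.lift_snd, Limits.comp_zero]
  -- `0 → B₁ → A → W → 0`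
  have hseφ := SRA.middle_shortExact b₁ f w₁ hse₁ (pushout.inr κ l) dd
    (by rw [hdddef]; simp [pushout.inr_desc]) hpush iW (pullback.snd p g) (by rw [hiWdef, pullback.lift_snd]) hseX
    φ hφ1 hφ2
  -- kernel of the composite `A → W → Y`
  obtain ⟨u, v, wuv, hseK, hseA⟩ := SRA.comp_kernel_shortExact (b₁ ≫ pushout.inr κ l) φ _ hseφ
    ι₂ (pullback.fst p g) _ hseWY
  -- memberships
  have hA_mem : pushout κ l ∈ A₀ := by
    refine (hcp.1 _).2 (fun B hB => ?_)
    exact SRA.ext1Zero_of_shortExact₁ B (pushout.inr κ l) dd (by rw [hdddef]; simp [pushout.inr_desc]) hpush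
      ((hcp.1 A₁).1 hA₁ B hB) ((hcp.1 A₂).1 hA₂ B hB)
  have hK_mem : Limits.kernel (φ ≫ pullback.fst p g) ∈ B₀ := by
    refine (hcp.2 _).2 (fun T hT => ?_)
    exact SRA.ext1Zero_of_shortExact₂ T u v wuv hseK
      ((hcp.2 B₁).1 hB₁ T hT) ((hcp.2 B₂).1 hB₂ T hT)
  exact ⟨pushout κ l, Limits.kernel (φ ≫ pullback.fst p g), hA_mem, hK_mem,
    Limits.kernel.ι _, φ ≫ pullback.fst p g, Limits.kernel.condition _, hseA⟩
end
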